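/- arXiv:2602.14037 — 4 statements merged into one kernel-verified Lean document; each statement's English description precedes it below -/
import Mathlib

section
/- Let X be a real m × n matrix with rank(X) ≤ 3, let a, b, c be real numbers, let B₂ be a real 2 × 2 matrix with det(B₂) ≠ 0, and suppose there exist injective maps f : Fin 4 → Fin m and g : Fin 4 → Fin n such that X.submatrix f g equals the 4 × 4 block-diagonal matrix with top-left block B₂, bottom-right block [[1, a], [b, c]], and zero off-diagonal 2 × 2 blocks. Then c = a·b. -/
set_option maxHeartbeats 1000000 in

theorem det_forcing_gadget_soundness (m n : ℕ) (X : Matrix (Fin m) (Fin n) ℝ)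
    (hX : X.rank ≤ 3) (a b c : ℝ)
    (B₂ : Matrix (Fin 2) (Fin 2) ℝ) (hB₂ : B₂.det ≠ 0)
    (f : Fin 4 → Fin m) (g : Fin 4 → Fin n)
    (hf : Function.Injective f) (hg : Function.Injective g)
    (hsub : X.submatrix f g =
      Matrix.reindex finSumFinEquiv finSumFinEquiv
        (Matrix.fromBlocks B₂ 0 0 (!![1, a; b, c]))) :
    c = a * b := by
  -- The 4×4 submatrix as a product P * X * Q
  set S := X.submatrix f g with hS
  have hfact : S = ((1 : Matrix (Fin m) (Fin m) ℝ).submatrix f id) * X *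
      ((1 : Matrix (Fin n) (Fin n) ℝ).submatrix id g) := by
    ext i j
    simp [hS, Matrix.mul_apply, Matrix.one_apply, Finset.sum_ite_eq, Finset.sum_ite_eq']
  have h1 : (((1 : Matrix (Fin m) (Fin m) ℝ).submatrix f id) * X *
      ((1 : Matrix (Fin n) (Fin n) ℝ).submatrix id g)).rank ≤
      (((1 : Matrix (Fin m) (Fin m) ℝ).submatrix f id) * X).rank :=
    Matrix.rank_mul_le_left _ _
  have h2 : (((1 : Matrix (Fin m) (Fin m) ℝ).submatrix f id) * X).rank ≤ X.rank :=
    Matrix.rank_mul_le_right _ _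
  have hrankS : S.rank ≤ X.rank := by
    rw [hfact]; exact le_trans h1 h2
  have hdetS : S.det = B₂.det * (c - a * b) := by
    rw [hsub]
    rw [Matrix.reindex_apply, Matrix.det_submatrix_equiv_self,
      Matrix.det_fromBlocks_zero₂₁]
    congr 1
    simp [Matrix.det_fin_two]
  by_contra hc
  have hdet : S.det ≠ 0 := by
    rw [hdetS]
    exact mul_ne_zero hB₂ (sub_ne_zero.mpr (fun h => hc (by linarith)))
  have : S.rank = 4 := by
    have := Matrix.rank_of_isUnit S ((Matrix.isUnit_iff_isUnit_det S).mpr hdet.isUnit)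
    simpa using this
  omega
end

section
/- Let X be a real m × n matrix with rank(X) ≤ 3, let I₀ : Fin 3 → Fin m and J₀ : Fin 3 → Fin n be injective maps, and let B be a real 3 × 3 matrix with det(B) ≠ 0 such that X.submatrix I₀ J₀ = B. Then there exist a real m × 3 matrix U and a real 3 × n matrix V with X = U * V, U.submatrix I₀ id = I₃ (the 3 × 3 identity), and V.submatrix id J₀ = B. -/
set_option maxHeartbeats 1000000

open Matrix Submodule Module

theorem gauge_fixing_canonical_factors (m n : ℕ) (X : Matrix (Fin m) (Fin n) ℝ)
    (hX : X.rank ≤ 3)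
    (I₀ : Fin 3 → Fin m) (J₀ : Fin 3 → Fin n)
    (hI₀ : Function.Injective I₀) (hJ₀ : Function.Injective J₀)
    (B : Matrix (Fin 3) (Fin 3) ℝ) (hB : B.det ≠ 0)
    (hpin : X.submatrix I₀ J₀ = B) :
    ∃ (U : Matrix (Fin m) (Fin 3) ℝ) (V : Matrix (Fin 3) (Fin n) ℝ),
      X = U * V ∧ U.submatrix I₀ id = (1 : Matrix (Fin 3) (Fin 3) ℝ) ∧
        V.submatrix id J₀ = B := by
  have hBunit : IsUnit B.det := isUnit_iff_ne_zero.mpr hB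
  -- columns of X
  set c : Fin 3 → (Fin m → ℝ) := fun b => fun i => X i (J₀ b) with hc
  set W : Submodule ℝ (Fin m → ℝ) := Submodule.span ℝ (Set.range Xᵀ) with hW
  have hcW : ∀ b, c b ∈ W := fun b =>
    Submodule.subset_span ⟨J₀ b, rfl⟩
  -- cancellation helper
  have hcancel : ∀ t : Fin 3 → ℝ, B⁻¹ *ᵥ (B *ᵥ t) = t := by
    intro t
    rw [Matrix.mulVec_mulVec, Matrix.nonsing_inv_mul _ hBunit, Matrix.one_mulVec]
  -- linear independence of the selected columns
  have hli : LinearIndependent ℝ c := by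
    rw [Fintype.linearIndependent_iff]
    intro t ht b
    have hBt : B *ᵥ t = 0 := by
      funext a
      have := congrFun ht (I₀ a)
      simp only [Finset.sum_apply, Pi.smul_apply, smul_eq_mul, Pi.zero_apply] at this
      calc (B *ᵥ t) a = ∑ b, B a b * t b := by simp [Matrix.mulVec, dotProduct]
        _ = ∑ b, t b * X (I₀ a) (J₀ b) := by
            refine Finset.sum_congr rfl fun b _ => ?_
            rw [← hpin]; simp [Matrix.submatrix_apply, mul_comm]
        _ = 0 := this
    have := hcancel t
    rw [hBt, Matrix.mulVec_zero] at this
    exact (congrFun this.symm b)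
  -- independence inside W
  have hliW : LinearIndependent ℝ (fun b => (⟨c b, hcW b⟩ : W)) := by
    apply hli.of_comp W.subtype
  have hrank : X.rank = finrank ℝ W := by
    rw [hW]; exact X.rank_eq_finrank_span_cols
  have hge : 3 ≤ finrank ℝ W := by
    have := hliW.fintype_card_le_finrank
    simpa using this
  have hfin : finrank ℝ W = 3 := le_antisymm (by omega) hge
  have hspan : Submodule.span ℝ (Set.range (fun b => (⟨c b, hcW b⟩ : W))) = ⊤ :=
    hliW.span_eq_top_of_card_eq_finrank (by simp [hfin])
  -- every column of X is a combination of the c's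
  have hcol : ∀ j : Fin n, ∃ w : Fin 3 → ℝ, ∀ i, X i j = ∑ b, w b * X i (J₀ b) := by
    intro j
    have hmem : (⟨Xᵀ j, Submodule.subset_span ⟨j, rfl⟩⟩ : W) ∈
        Submodule.span ℝ (Set.range (fun b => (⟨c b, hcW b⟩ : W))) := by
      rw [hspan]; trivial
    rw [mem_span_range_iff_exists_fun] at hmem
    obtain ⟨w, hw⟩ := hmem
    refine ⟨w, fun i => ?_⟩
    have := congrArg (fun x : W => (x : Fin m → ℝ) i) hw
    simpa [c, Matrix.transpose_apply, mul_comm] using this.symm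
  -- the factors
    
  refine ⟨X.submatrix id J₀ * B⁻¹, X.submatrix I₀ id, ?_, ?_, ?_⟩
  · funext i j
    obtain ⟨w, hw⟩ := hcol j
    -- row constraint: (fun a => X (I₀ a) j) = B *ᵥ w
    have hrow : (fun a => X (I₀ a) j) = B *ᵥ w := by
      funext a
      rw [hw (I₀ a)]
      simp only [Matrix.mulVec, dotProduct]
      refine Finset.sum_congr rfl fun b _ => ?_
      rw [← hpin]; simp [Matrix.submatrix_apply, mul_comm]
    have hwval : w = B⁻¹ *ᵥ (fun a => X (I₀ a) j) := by
      rw [hrow, hcancel]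
    calc X i j = ∑ b, w b * X i (J₀ b) := hw i
      _ = ∑ b, (∑ a, B⁻¹ b a * X (I₀ a) j) * X i (J₀ b) := by
          refine Finset.sum_congr rfl fun b _ => ?_
          rw [hwval]; simp [Matrix.mulVec, dotProduct]
      _ = (X.submatrix id J₀ * B⁻¹ * X.submatrix I₀ id) i j := by
          simp only [Matrix.mul_apply, Matrix.submatrix_apply, id_eq, Finset.sum_mul]
          rw [Finset.sum_comm]
          exact Finset.sum_congr rfl fun b _ => Finset.sum_congr rfl fun a _ => by ring
  · have : (X.submatrix id J₀ * B⁻¹).submatrix I₀ id = X.submatrix I₀ J₀ * B⁻¹ := by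
      funext a b
      simp [Matrix.mul_apply, Matrix.submatrix_apply]
    rw [this, hpin, Matrix.mul_nonsing_inv _ hBunit]
  · funext a b
    rw [← hpin]; rfl
end

section
/- Let X be a real m × n matrix, let I₀ : Fin 3 → Fin m and J₀ : Fin 3 → Fin n be injective maps, and let B be a real 3 × 3 matrix with det(B) ≠ 0 such that X.submatrix I₀ J₀ = B. Suppose U is a real m × 3 matrix and V a real 3 × n matrix with X = U * V, U.submatrix I₀ id = I₃, and V.submatrix id J₀ = B. Then V = X.submatrix I₀ id and U = (X.submatrix id J₀) * B⁻¹; in particular, the canonical-gauge factorization is unique. -/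
theorem canonical_gauge_uniqueness (m n : ℕ) (X : Matrix (Fin m) (Fin n) ℝ)
    (I₀ : Fin 3 → Fin m) (J₀ : Fin 3 → Fin n)
    (hI₀ : Function.Injective I₀) (hJ₀ : Function.Injective J₀)
    (B : Matrix (Fin 3) (Fin 3) ℝ) (hB : B.det ≠ 0)
    (hpin : X.submatrix I₀ J₀ = B)
    (U : Matrix (Fin m) (Fin 3) ℝ) (V : Matrix (Fin 3) (Fin n) ℝ)
    (hfac : X = U * V)
    (hU : U.submatrix I₀ id = (1 : Matrix (Fin 3) (Fin 3) ℝ))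
    (hV : V.submatrix id J₀ = B) :
    V = X.submatrix I₀ id ∧ U = X.submatrix id J₀ * B⁻¹ := by
  have hBu : IsUnit B.det := isUnit_iff_ne_zero.mpr hB
  have hVeq : V = X.submatrix I₀ id := by
    ext a j
    have h1 : ∀ k, U (I₀ a) k = (1 : Matrix (Fin 3) (Fin 3) ℝ) a k := fun k => by
      have := congrFun (congrFun hU a) k
      simpa [Matrix.submatrix_apply] using this
    simp only [Matrix.submatrix_apply, hfac, Matrix.mul_apply, h1, id]
    simp [Matrix.one_apply, Finset.sum_ite_eq]
  refine ⟨hVeq, ?_⟩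
  have hXJ : X.submatrix id J₀ = U * B := by
    ext i b
    have h2 : ∀ k, V k (J₀ b) = B k b := fun k => by
      have := congrFun (congrFun hV k) b
      simpa [Matrix.submatrix_apply] using this
    simp [Matrix.submatrix_apply, hfac, Matrix.mul_apply, h2]
  rw [hXJ, Matrix.mul_nonsing_inv_cancel_right _ _ hBu]
end

section
/- Fix m, n, a finite index type T, injective maps I₀ : Fin 3 → Fin m and J₀ : Fin 3 → Fin n, and a real 3 × 3 matrix B with det(B) ≠ 0. For each t ∈ T let Uₜ be a real m × 3 matrix and Vₜ a real 3 × n matrix with Uₜ.submatrix I₀ id = I₃ and Vₜ.submatrix id J₀ = B, and let Rₜ ⊆ Fin m and Cₜ ⊆ Fin n be sets with range(I₀) ⊆ Rₜ and range(J₀) ⊆ Cₜ such that for all t ≠ t' the sets Rₜ \ range(I₀) and Rₜ' \ range(I₀) are disjoint and the sets Cₜ \ range(J₀) and Cₜ' \ range(J₀) are disjoint. Then there exist a real m × 3 matrix U and a real 3 × n matrix V such that rank(U * V) ≤ 3 and for every t ∈ T, every i ∈ Rₜ, and every j ∈ Cₜ, (U * V)_{ij} = (Uₜ * Vₜ)_{ij}.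 -/
/-! In the common gauge all rows of the `U t` indexed by `range I₀` form the identity and all
columns of the `V t` indexed by `range J₀` form `B`, while two supports `R t`, `R t'` (resp.
`C t`, `C t'`) meet only inside these gauge indices. Hence the local rows glue to one global
`m × 3` matrix and the local columns to one global `3 × n` matrix; their product has rank at
most 3 because its inner dimension is 3. -/

open Set
open scoped Matrix

section Gluing

variable {T α β : Type*}

theorem exists_eqOn_of_eqOn_inter [Nonempty β] {f : T → α → β} {S : T → Set α}
    (h : ∀ t t', EqOn (f t) (f t') (S t ∩ S t')) :
    ∃ g : α → β, ∀ t, EqOn g (f t) (S t) := by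
  classical
  refine ⟨fun i => if hi : ∃ t, i ∈ S t then f hi.choose i else Classical.arbitrary β,
    fun t i hi => ?_⟩
  have hex : ∃ t, i ∈ S t := ⟨t, hi⟩
  simp only [dif_pos hex]
  exact h _ t ⟨hex.choose_spec, hi⟩

theorem eqOn_inter_of_pairwise_disjoint_sdiff {f : T → α → β} {S : T → Set α} {K : Set α}
    (hK : ∀ t t', EqOn (f t) (f t') K) (hS : Pairwise fun t t' => Disjoint (S t \ K) (S t' \ K)) :
    ∀ t t', EqOn (f t) (f t') (S t ∩ S t') := by
  intro t t' i ⟨hi, hi'⟩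
  by_cases hiK : i ∈ K
  · exact hK t t' hiK
  obtain rfl : t = t' := by
    by_contra hne
    exact (hS hne).ne_of_mem ⟨hi, hiK⟩ ⟨hi', hiK⟩ rfl
  rfl

end Gluing

theorem Matrix.eqOn_range_of_submatrix_eq {l m n α : Type*} {A A' : Matrix m n α} {f : l → m}
    (h : A.submatrix f id = A'.submatrix f id) : EqOn A A' (range f) := by
  rintro _ ⟨a, rfl⟩
  exact congrFun h a

theorem global_embedding_of_gadget_witnesses_general
    (m n : ℕ) (T : Type)
    (I₀ : Fin 3 → Fin m) (J₀ : Fin 3 → Fin n)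
    (B : Matrix (Fin 3) (Fin 3) ℝ)
    (U : T → Matrix (Fin m) (Fin 3) ℝ) (V : T → Matrix (Fin 3) (Fin n) ℝ)
    (hU : ∀ t, (U t).submatrix I₀ id = (1 : Matrix (Fin 3) (Fin 3) ℝ))
    (hV : ∀ t, (V t).submatrix id J₀ = B)
    (R : T → Set (Fin m)) (C : T → Set (Fin n))
    (hRdisj : ∀ t t', t ≠ t' →
      Disjoint (R t \ Set.range I₀) (R t' \ Set.range I₀))
    (hCdisj : ∀ t t', t ≠ t' →
      Disjoint (C t \ Set.range J₀) (C t' \ Set.range J₀)) :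
    ∃ (U' : Matrix (Fin m) (Fin 3) ℝ) (V' : Matrix (Fin 3) (Fin n) ℝ),
      (U' * V').rank ≤ 3 ∧
      ∀ t, ∀ i ∈ R t, ∀ j ∈ C t, (U' * V') i j = (U t * V t) i j := by
  have hrows : ∀ t t', EqOn (U t) (U t') (range I₀) := fun t t' =>
    Matrix.eqOn_range_of_submatrix_eq ((hU t).trans (hU t').symm)
  have hcols : ∀ t t', EqOn (V t)ᵀ (V t')ᵀ (range J₀) := fun t t' =>
    Matrix.eqOn_range_of_submatrix_eq (by
      rw [← Matrix.transpose_submatrix, ← Matrix.transpose_submatrix, hV, hV])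
  obtain ⟨u, hu⟩ := exists_eqOn_of_eqOn_inter
    (eqOn_inter_of_pairwise_disjoint_sdiff hrows fun _ _ => hRdisj _ _)
  obtain ⟨v, hv⟩ := exists_eqOn_of_eqOn_inter
    (eqOn_inter_of_pairwise_disjoint_sdiff hcols fun _ _ => hCdisj _ _)
  refine ⟨Matrix.of u, (Matrix.of v)ᵀ, ?_, fun t i hi j hj => ?_⟩
  · calc (Matrix.of u * (Matrix.of v)ᵀ).rank ≤ (Matrix.of u).rank :=
        Matrix.rank_mul_le_left _ _
      _ ≤ 3 := by simpa using (Matrix.of u).rank_le_card_width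
  · rw [Matrix.mul_apply', Matrix.mul_apply']
    exact congrArg₂ dotProduct (hu t hi) (hv t hj)

theorem global_embedding_of_gadget_witnesses
    (m n : ℕ) (T : Type) [Fintype T]
    (I₀ : Fin 3 → Fin m) (J₀ : Fin 3 → Fin n)
    (hI₀ : Function.Injective I₀) (hJ₀ : Function.Injective J₀)
    (B : Matrix (Fin 3) (Fin 3) ℝ) (hB : B.det ≠ 0)
    (U : T → Matrix (Fin m) (Fin 3) ℝ) (V : T → Matrix (Fin 3) (Fin n) ℝ)
    (hU : ∀ t, (U t).submatrix I₀ id = (1 : Matrix (Fin 3) (Fin 3) ℝ))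
    (hV : ∀ t, (V t).submatrix id J₀ = B)
    (R : T → Set (Fin m)) (C : T → Set (Fin n))
    (hR : ∀ t, Set.range I₀ ⊆ R t) (hC : ∀ t, Set.range J₀ ⊆ C t)
    (hRdisj : ∀ t t', t ≠ t' →
      Disjoint (R t \ Set.range I₀) (R t' \ Set.range I₀))
    (hCdisj : ∀ t t', t ≠ t' →
      Disjoint (C t \ Set.range J₀) (C t' \ Set.range J₀)) :
    ∃ (U' : Matrix (Fin m) (Fin 3) ℝ) (V' : Matrix (Fin 3) (Fin n) ℝ),
      (U' * V').rank ≤ 3 ∧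
      ∀ t, ∀ i ∈ R t, ∀ j ∈ C t, (U' * V') i j = (U t * V t) i j :=
  global_embedding_of_gadget_witnesses_general m n T I₀ J₀ B U V hU hV R C hRdisj hCdisj
end
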